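/- Let H = [0,1]^N and H_V = {0,1}^N. For any three vertices x_k, x_j, x_l ∈ H_V, the set B_kj^l = {x ∈ H : x_k·x = x_j·x and x_j·x ≥ x_l·x} equals the convex hull of H_kj^l = {h ∈ H_V : x_k·h = x_j·h and x_j·h ≥ x_l·h}. -/

import Mathlib

/-- Standard inner product on `Fin N → ℝ`. -/
noncomputable def dotp {N : ℕ} (a b : Fin N → ℝ) : ℝ := ∑ i, a i * b i

/-- The unit hypercube `[0,1]^N`. -/
def unitCube (N : ℕ) : Set (Fin N → ℝ) := {x | ∀ i, x i ∈ Set.Icc (0:ℝ) 1}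

/-- Vertices of the unit hypercube: 0/1-valued vectors. -/
def cubeVerts (N : ℕ) : Set (Fin N → ℝ) := {x | ∀ i, x i = 0 ∨ x i = 1}

/-!
Both sets are cut out by `c ⬝ᵥ x = 0` and `0 ≤ d ⬝ᵥ x` with `c = x_k - x_j` and
`d = x_j - x_l`, sign vectors with `c i * d i ≤ 0`. By Krein–Milman it suffices that every extreme
point `x` of `B = [0,1]^N ∩ {c ⬝ᵥ x = 0, 0 ≤ d ⬝ᵥ x}` is a vertex. If `x` has a fractional
coordinate, integrality of `c ⬝ᵥ x = 0` forces a second fractional coordinate in the support of `c`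
(likewise for `d` when that constraint is tight), and among two or three such coordinates one finds
a nonzero direction `v`, supported on fractional coordinates, with `c ⬝ᵥ v = d ⬝ᵥ v = 0`; then
`x ± ε v ∈ B`.
-/

open Set Filter Topology Function

section ExtremePoints

variable {E : Type*} [AddCommGroup E] [Module ℝ E]

theorem notMem_extremePoints_of_eventually_add_smul_mem {A : Set E} {x v : E} (hv : v ≠ 0)
    (h : ∀ᶠ s in 𝓝 (0 : ℝ), x + s • v ∈ A) : x ∉ A.extremePoints ℝ := by
  obtain ⟨ε, hε, hball⟩ := Metric.eventually_nhds_iff.1 h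
  have hmem : ∀ s : ℝ, |s| = ε / 2 → x + s • v ∈ A := fun s hs =>
    hball (by rw [Real.dist_0_eq_abs, hs]; linarith)
  intro hx
  have hmid : x ∈ openSegment ℝ (x + (ε / 2) • v) (x + (-(ε / 2)) • v) :=
    ⟨1 / 2, 1 / 2, by norm_num, by norm_num, by norm_num, by module⟩
  have hεv : x + (ε / 2) • v = x :=
    hx.2 (hmem _ (abs_of_pos (by linarith))) (hmem _ (by rw [abs_neg, abs_of_pos (by linarith)]))
      hmid
  exact hv ((smul_eq_zero.1 (add_eq_left.1 hεv)).resolve_left (by linarith))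

variable [TopologicalSpace E] [T2Space E] [IsTopologicalAddGroup E] [ContinuousSMul ℝ E]
  [LocallyConvexSpace ℝ E]

theorem convexHull_eq_of_extremePoints_subset {A S : Set E} (hA : IsCompact A)
    (hAc : Convex ℝ A) (hS : S.Finite) (hSA : S ⊆ A) (hext : A.extremePoints ℝ ⊆ S) :
    convexHull ℝ S = A := by
  refine (convexHull_min hSA hAc).antisymm ?_
  calc A = closure (convexHull ℝ (A.extremePoints ℝ)) :=
        (closure_convexHull_extremePoints hA hAc).symm
    _ ⊆ closure (convexHull ℝ S) := closure_mono (convexHull_mono hext)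
    _ = convexHull ℝ S := (hS.isClosed_convexHull (𝕜 := ℝ)).closure_eq

end ExtremePoints

variable {N : ℕ}

theorem dotp_eq_dotProduct (a b : Fin N → ℝ) : dotp a b = a ⬝ᵥ b := rfl

theorem unitCube_eq_pi : unitCube N = univ.pi fun _ => Icc 0 1 :=
  ext fun _ => ⟨fun h i _ => h i, fun h i => h i (mem_univ i)⟩

theorem isCompact_unitCube : IsCompact (unitCube N) := by
  rw [unitCube_eq_pi]
  exact isCompact_univ_pi fun _ => isCompact_Icc

theorem convex_unitCube : Convex ℝ (unitCube N) := by
  rw [unitCube_eq_pi]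
  exact convex_pi fun _ _ => convex_Icc 0 1

theorem finite_cubeVerts : (cubeVerts N).Finite := by
  refine (Finite.pi fun _ => (finite_singleton (1 : ℝ)).insert 0).subset fun x hx i _ => ?_
  rcases hx i with h | h <;> simp [h]

theorem cubeVerts_subset_unitCube : cubeVerts N ⊆ unitCube N := fun x hx i => by
  rcases hx i with h | h <;> simp [h]

theorem eq_zero_or_eq_one_of_notMem_Ioo {x : Fin N → ℝ} (hx : x ∈ unitCube N) {i : Fin N}
    (hi : x i ∉ Ioo 0 1) : x i = 0 ∨ x i = 1 := by
  rcases (hx i).1.eq_or_lt with h | h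
  · exact .inl h.symm
  · exact .inr ((hx i).2.antisymm (not_lt.1 fun h' => hi ⟨h, h'⟩))

def constraintSet (c d : Fin N → ℝ) : Set (Fin N → ℝ) := {x | c ⬝ᵥ x = 0 ∧ 0 ≤ d ⬝ᵥ x}

theorem convex_constraintSet (c d : Fin N → ℝ) : Convex ℝ (constraintSet c d) := by
  intro x hx y hy a b ha hb _
  simp only [constraintSet, mem_ofPred_eq, dotProduct_add, dotProduct_smul, smul_eq_mul,
    hx.1, hy.1] at hx hy ⊢
  exact ⟨by ring, add_nonneg (mul_nonneg ha hx.2) (mul_nonneg hb hy.2)⟩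

theorem isClosed_constraintSet (c d : Fin N → ℝ) : IsClosed (constraintSet c d) :=
  (isClosed_eq (continuous_const.dotProduct continuous_id) continuous_const).inter
    (isClosed_le continuous_const (continuous_const.dotProduct continuous_id))

def IsSignVector (c : Fin N → ℝ) : Prop := ∀ i, c i = -1 ∨ c i = 0 ∨ c i = 1

namespace IsSignVector

variable {c d : Fin N → ℝ}

theorem mul_self_eq_one (hc : IsSignVector c) {i : Fin N} (hi : c i ≠ 0) : c i * c i = 1 := by
  rcases hc i with h | h | h <;> simp_all

theorem eq_neg_of_mul_nonpos (hc : IsSignVector c) (hd : IsSignVector d) {i : Fin N}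
    (hcd : c i * d i ≤ 0) (hci : c i ≠ 0) (hdi : d i ≠ 0) : d i = -c i := by
  rcases hc i with h | h | h <;> rcases hd i with g | g | g <;> simp_all <;> linarith

theorem mem_intRange (hc : IsSignVector c) (i : Fin N) : c i ∈ (Int.castRingHom ℝ).range := by
  rcases hc i with h | h | h <;> rw [h]
  exacts [neg_mem (one_mem _), zero_mem _, one_mem _]

end IsSignVector

theorem isSignVector_sub {a b : Fin N → ℝ} (ha : a ∈ cubeVerts N) (hb : b ∈ cubeVerts N) :
    IsSignVector (a - b) := fun i => by
  rcases ha i with h | h <;> rcases hb i with g | g <;> simp [h, g]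

theorem sub_mul_sub_nonpos {a b e : Fin N → ℝ} (ha : a ∈ cubeVerts N) (hb : b ∈ cubeVerts N)
    (he : e ∈ cubeVerts N) (i : Fin N) : (a - b) i * (b - e) i ≤ 0 := by
  rcases ha i with h | h <;> rcases hb i with g | g <;> rcases he i with f | f <;> simp [h, g, f]

/-- If `c ⬝ᵥ x = 0` for a sign vector `c`, the terms `c j * x j` at the non-fractional coordinates
are integers, so a single fractional coordinate in the support of `c` cannot balance them. -/
theorem exists_ne_mem_Ioo_of_dotProduct_eq_zero {c x : Fin N → ℝ} (hc : IsSignVector c)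
    (hx : x ∈ unitCube N) (hcx : c ⬝ᵥ x = 0) {i : Fin N} (hi : x i ∈ Ioo 0 1) (hci : c i ≠ 0) :
    ∃ j ≠ i, c j ≠ 0 ∧ x j ∈ Ioo 0 1 := by
  by_contra! h
  set Z := (Int.castRingHom ℝ).range
  have hterm : ∀ j ∈ Finset.univ.erase i, c j * x j ∈ Z := by
    intro j hj
    by_cases hcj : c j = 0
    · simp [hcj, zero_mem]
    have hxj := eq_zero_or_eq_one_of_notMem_Ioo hx (h j (Finset.ne_of_mem_erase hj) hcj)
    exact mul_mem (hc.mem_intRange j) (by rcases hxj with h' | h' <;> simp [h', zero_mem, one_mem])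
  have hcxi : c i * x i ∈ Z := by
    have hsplit := Finset.add_sum_erase Finset.univ (fun j => c j * x j) (Finset.mem_univ i)
    rw [← dotProduct, hcx, add_eq_zero_iff_eq_neg] at hsplit
    exact hsplit ▸ neg_mem (sum_mem hterm)
  obtain ⟨n, hn⟩ : x i ∈ Z := by
    simpa only [← mul_assoc, hc.mul_self_eq_one hci, one_mul] using
      mul_mem (hc.mem_intRange i) hcxi
  rw [← hn, eq_intCast, mem_Ioo] at hi
  norm_cast at hi
  omega

def IsFreeDirection (c d x v : Fin N → ℝ) : Prop :=
  v ≠ 0 ∧ support v ⊆ {i | x i ∈ Ioo 0 1} ∧ c ⬝ᵥ v = 0 ∧ d ⬝ᵥ v = 0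

section FreeDirection

variable {c d x : Fin N → ℝ}

theorem IsFreeDirection.swap {v : Fin N → ℝ} (h : IsFreeDirection c d x v) :
    IsFreeDirection d c x v :=
  ⟨h.1, h.2.1, h.2.2.2, h.2.2.1⟩

theorem exists_isFreeDirection_single {i : Fin N} (hi : x i ∈ Ioo 0 1) (hci : c i = 0)
    (hdi : d i = 0) : ∃ v, IsFreeDirection c d x v :=
  ⟨Pi.single i 1, by simp, Pi.support_single_subset.trans (singleton_subset_iff.2 hi),
    by simp [hci], by simp [hdi]⟩

theorem exists_isFreeDirection_pair {i j : Fin N} (hij : i ≠ j) (hi : x i ∈ Ioo 0 1)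
    (hj : x j ∈ Ioo 0 1) (hcj : c j ≠ 0) (hdij : d i * c j = d j * c i) :
    ∃ v, IsFreeDirection c d x v := by
  refine ⟨Pi.single i (c j) - Pi.single j (c i), fun hv => hcj ?_, ?_, ?_, ?_⟩
  · simpa [Pi.single_apply, hij] using congrFun hv i
  · refine support_subset_iff'.2 fun m hm => ?_
    simp [show m ≠ i from fun h => hm (h ▸ hi), show m ≠ j from fun h => hm (h ▸ hj)]
  · simp only [dotProduct_sub, dotProduct_single]; ring
  · simp only [dotProduct_sub, dotProduct_single]; linarith

/-- The direction `e_r - c_r c_a e_a - d_r d_b e_b`: the `a`-term cancels the change of `c ⬝ᵥ ·`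
and the `b`-term that of `d ⬝ᵥ ·`. -/
theorem exists_isFreeDirection_triple {a b r : Fin N} (har : a ≠ r) (hbr : b ≠ r)
    (ha : x a ∈ Ioo 0 1) (hb : x b ∈ Ioo 0 1) (hr : x r ∈ Ioo 0 1) (hca : c a * c a = 1)
    (hcb : c b = 0) (hda : d a = 0) (hdb : d b * d b = 1) : ∃ v, IsFreeDirection c d x v := by
  refine ⟨Pi.single r 1 - Pi.single a (c r * c a) - Pi.single b (d r * d b), fun hv => ?_, ?_,
    ?_, ?_⟩
  · simpa [Pi.single_apply, har.symm, hbr.symm] using congrFun hv r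
  · refine support_subset_iff'.2 fun m hm => ?_
    simp [show m ≠ a from fun h => hm (h ▸ ha),
      show m ≠ b from fun h => hm (h ▸ hb), show m ≠ r from fun h => hm (h ▸ hr)]
  · simp only [dotProduct_sub, dotProduct_single, hcb]; linear_combination (-c r) * hca
  · simp only [dotProduct_sub, dotProduct_single, hda]; linear_combination (-d r) * hdb

theorem exists_isFreeDirection_of_eq_zero_of_ne_zero (hc : IsSignVector c) (hd : IsSignVector d)
    (hcd : ∀ i, c i * d i ≤ 0) (hx : x ∈ unitCube N) (hdx : d ⬝ᵥ x = 0) {a r : Fin N}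
    (har : a ≠ r) (ha : x a ∈ Ioo 0 1) (hr : x r ∈ Ioo 0 1) (hca : c a ≠ 0) (hda : d a = 0)
    (hcr : c r ≠ 0) (hdr : d r ≠ 0) : ∃ v, IsFreeDirection c d x v := by
  obtain ⟨k, hkr, hdk, hk⟩ := exists_ne_mem_Ioo_of_dotProduct_eq_zero hd hx hdx hr hdr
  by_cases hck : c k = 0
  · exact exists_isFreeDirection_triple har hkr ha hk hr (hc.mul_self_eq_one hca) hck hda
      (hd.mul_self_eq_one hdk)
  · refine exists_isFreeDirection_pair hkr.symm hr hk hck ?_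
    rw [hc.eq_neg_of_mul_nonpos hd (hcd r) hcr hdr, hc.eq_neg_of_mul_nonpos hd (hcd k) hck hdk]
    ring

theorem exists_isFreeDirection_of_ne_zero (hc : IsSignVector c) (hd : IsSignVector d)
    (hcd : ∀ i, c i * d i ≤ 0) (hx : x ∈ unitCube N) (hcx : c ⬝ᵥ x = 0) (hdx : d ⬝ᵥ x = 0)
    {i : Fin N} (hi : x i ∈ Ioo 0 1) (hci : c i ≠ 0) :
    ∃ v, IsFreeDirection c d x v := by
  obtain ⟨j, hji, hcj, hj⟩ := exists_ne_mem_Ioo_of_dotProduct_eq_zero hc hx hcx hi hci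
  by_cases hdij : d i * c j = d j * c i
  · exact exists_isFreeDirection_pair hji.symm hi hj hcj hdij
  have hd_neg : ∀ m, c m ≠ 0 → d m ≠ 0 → d m = -c m := fun m hcm hdm =>
    hc.eq_neg_of_mul_nonpos hd (hcd m) hcm hdm
  rcases eq_or_ne (d i) 0 with hdi | hdi
  · have hdj : d j ≠ 0 := fun hdj => hdij (by rw [hdi, hdj, zero_mul, zero_mul])
    exact exists_isFreeDirection_of_eq_zero_of_ne_zero hc hd hcd hx hdx hji.symm hi hj hci
      hdi hcj hdj
  · have hdj : d j = 0 := by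
      by_contra hdj
      exact hdij (by rw [hd_neg i hci hdi, hd_neg j hcj hdj]; ring)
    exact exists_isFreeDirection_of_eq_zero_of_ne_zero hc hd hcd hx hdx hji hj hi hcj hdj
      hci hdi

theorem exists_isFreeDirection (hc : IsSignVector c) (hd : IsSignVector d)
    (hcd : ∀ i, c i * d i ≤ 0) (hx : x ∈ unitCube N) (hcx : c ⬝ᵥ x = 0) (hdx : d ⬝ᵥ x = 0)
    {i : Fin N} (hi : x i ∈ Ioo 0 1) :
    ∃ v, IsFreeDirection c d x v := by
  by_cases hci : c i = 0
  · by_cases hdi : d i = 0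
    · exact exists_isFreeDirection_single hi hci hdi
    · obtain ⟨v, hv⟩ := exists_isFreeDirection_of_ne_zero hd hc
        (fun m => mul_comm (c m) (d m) ▸ hcd m) hx hdx hcx hi hdi
      exact ⟨v, hv.swap⟩
  · exact exists_isFreeDirection_of_ne_zero hc hd hcd hx hcx hdx hi hci

end FreeDirection

theorem eventually_add_smul_mem_unitCube {x v : Fin N → ℝ} (hx : x ∈ unitCube N)
    (hv : support v ⊆ {i | x i ∈ Ioo 0 1}) : ∀ᶠ s in 𝓝 (0 : ℝ), x + s • v ∈ unitCube N := by
  refine eventually_all.2 fun i => ?_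
  by_cases hvi : v i = 0
  · exact .of_forall fun s => by simpa [hvi] using hx i
  · have hlim : Tendsto (fun s : ℝ => x i + s * v i) (𝓝 0) (𝓝 (x i)) := by
      simpa using ((continuous_id.mul continuous_const).const_add (x i)).tendsto (0 : ℝ)
    obtain ⟨h0, h1⟩ := hv hvi
    exact (hlim.eventually (Ioo_mem_nhds h0 h1)).mono fun s hs => by
      simpa using Ioo_subset_Icc_self hs

theorem extremePoints_subset_cubeVerts {c d : Fin N → ℝ} (hc : IsSignVector c)
    (hd : IsSignVector d) (hcd : ∀ i, c i * d i ≤ 0) :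
    (unitCube N ∩ constraintSet c d).extremePoints ℝ ⊆ cubeVerts N := by
  intro x hx
  obtain ⟨hxc, hcx, hdx⟩ := hx.1
  by_contra hxv
  obtain ⟨i, hi⟩ : ∃ i, x i ∈ Ioo 0 1 := by
    by_contra! h
    exact hxv fun i => eq_zero_or_eq_one_of_notMem_Ioo hxc (h i)
  obtain ⟨v, hv0, hsupp, hcv, hdv⟩ : ∃ v, v ≠ 0 ∧ support v ⊆ {i | x i ∈ Ioo 0 1} ∧
      c ⬝ᵥ v = 0 ∧ ∀ᶠ s in 𝓝 (0 : ℝ), 0 ≤ d ⬝ᵥ (x + s • v) := by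
    rcases hdx.eq_or_lt with hdx | hdx
    · obtain ⟨v, hv0, hsupp, hcv, hdv⟩ := exists_isFreeDirection hc hd hcd hxc hcx hdx.symm hi
      exact ⟨v, hv0, hsupp, hcv, .of_forall fun s => by simp [dotProduct_add, hdv, ← hdx]⟩
    -- with `d ⬝ᵥ x > 0` only the constraint `c ⬝ᵥ x = 0` is active, so take `d = 0`
    · obtain ⟨v, hv0, hsupp, hcv, -⟩ := exists_isFreeDirection (d := 0) hc
        (fun _ => .inr (.inl rfl)) (fun _ => by simp) hxc hcx (zero_dotProduct x) hi
      have hlim : Tendsto (fun s : ℝ => d ⬝ᵥ (x + s • v)) (𝓝 0) (𝓝 (d ⬝ᵥ x)) := by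
        have hcont : Continuous fun s : ℝ => d ⬝ᵥ (x + s • v) := by fun_prop
        simpa using hcont.tendsto 0
      exact ⟨v, hv0, hsupp, hcv, (hlim.eventually (lt_mem_nhds hdx)).mono fun _ => le_of_lt⟩
  refine notMem_extremePoints_of_eventually_add_smul_mem hv0 ?_ hx
  filter_upwards [eventually_add_smul_mem_unitCube hxc hsupp, hdv] with s hs hds
  exact ⟨hs, by simp [dotProduct_add, hcx, hcv], hds⟩

theorem convexHull_cubeVerts_inter_constraintSet {c d : Fin N → ℝ} (hc : IsSignVector c)
    (hd : IsSignVector d) (hcd : ∀ i, c i * d i ≤ 0) :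
    convexHull ℝ (cubeVerts N ∩ constraintSet c d) = unitCube N ∩ constraintSet c d :=
  convexHull_eq_of_extremePoints_subset
    (isCompact_unitCube.inter_right (isClosed_constraintSet c d))
    (convex_unitCube.inter (convex_constraintSet c d)) (finite_cubeVerts.inter_of_left _)
    (inter_subset_inter_left _ cubeVerts_subset_unitCube)
    (subset_inter (extremePoints_subset_cubeVerts hc hd hcd)
      (extremePoints_subset.trans inter_subset_right))

theorem stmt_4 {N : ℕ} (xk xj xl : Fin N → ℝ)
    (hxk : xk ∈ cubeVerts N) (hxj : xj ∈ cubeVerts N) (hxl : xl ∈ cubeVerts N) :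
    {x ∈ unitCube N | dotp xk x = dotp xj x ∧ dotp xj x ≥ dotp xl x} =
      convexHull ℝ {h ∈ cubeVerts N | dotp xk h = dotp xj h ∧ dotp xj h ≥ dotp xl h} := by
  have hsep : ∀ A : Set (Fin N → ℝ),
      {x ∈ A | dotp xk x = dotp xj x ∧ dotp xj x ≥ dotp xl x} =
        A ∩ constraintSet (xk - xj) (xj - xl) := fun A => by
    ext x
    simp only [mem_inter_iff, constraintSet, mem_ofPred_eq, dotp_eq_dotProduct,
      sub_dotProduct, sub_eq_zero, sub_nonneg, ge_iff_le]
  rw [hsep, hsep, convexHull_cubeVerts_inter_constraintSet (isSignVector_sub hxk hxj)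
    (isSignVector_sub hxj hxl) (sub_mul_sub_nonpos hxk hxj hxl)]
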